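/- arXiv:2210.10334 — 3 statements merged into one kernel-verified Lean document; each statement's English description precedes it below -/
import Mathlib

section
/- Let A(e)^{-1} := (1/(2⟨e, v-v'⟩²))·[e·(v-v')ᵀ] - (1/⟨e, v-v'⟩)·I_d for e ∈ ℝ^d with ⟨e, v-v'⟩ ≠ 0. Then the row vector obtained by applying the divergence with respect to e to each column of A(e)^{-1} equals (d/2)·(v-v')ᵀ/⟨e, v-v'⟩². -/
/-!
Differentiating along the `i`-th coordinate line `e + t • eᵢ`, on which `x ⬝ᵥ w = c + t wᵢ`
with `c = e ⬝ᵥ w`, the `(i, j)` entry has partial derivative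
`wⱼ / (2c²) - eᵢ wᵢ wⱼ / c³ + δᵢⱼ wᵢ / c²`. Summing over `i`, the middle terms add up to
`-wⱼ / c²` because `∑ eᵢ wᵢ = c`, cancelling the last one, and `d / 2 · wⱼ / c²` remains.
-/

open Matrix

variable {𝕜 : Type*} [RCLike 𝕜] {ι : Type*} [Fintype ι]

lemma hasDerivAt_add_mul_div_sq_sub_div (a b c s δ : 𝕜) (hc : c ≠ 0) :
    HasDerivAt (fun t => (a + t) * b / (2 * (c + t * s) ^ 2) - δ / (c + t * s))
      (b / (2 * c ^ 2) - a * s * b / c ^ 3 + δ * s / c ^ 2) 0 := by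
  have hline : HasDerivAt (fun t : 𝕜 => c + t * s) s 0 := by
    simpa using ((hasDerivAt_id (0 : 𝕜)).mul_const s).const_add c
  have hnum : HasDerivAt (fun t : 𝕜 => (a + t) * b) b 0 := by
    simpa using ((hasDerivAt_id (0 : 𝕜)).const_add a).mul_const b
  have hden : HasDerivAt (fun t : 𝕜 => 2 * (c + t * s) ^ 2) (2 * (2 * c * s)) 0 := by
    simpa using (hline.pow 2).const_mul 2
  have hc0 : c + 0 * s ≠ 0 := by simpa using hc
  refine ((hnum.div hden (by simpa using hc)).sub
    ((hasDerivAt_const 0 δ).div hline hc0)).congr_deriv ?_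
  simp only [zero_mul, add_zero, zero_sub]
  field_simp
  ring

lemma differentiable_dotProduct_const (w : ι → 𝕜) :
    Differentiable 𝕜 (fun x : ι → 𝕜 => x ⬝ᵥ w) := by
  unfold dotProduct
  fun_prop

lemma dotProduct_add_smul_single [DecidableEq ι] (e w : ι → 𝕜) (i : ι) (t : 𝕜) :
    (e + t • Pi.single i 1) ⬝ᵥ w = e ⬝ᵥ w + t * w i := by
  rw [add_dotProduct, smul_dotProduct, single_dotProduct, one_mul, smul_eq_mul]

lemma fderiv_apply_single_eq [DecidableEq ι] (w e : ι → 𝕜) (hc : e ⬝ᵥ w ≠ 0) (i j : ι) :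
    fderiv 𝕜 (fun x : ι → 𝕜 => x i * w j / (2 * (x ⬝ᵥ w) ^ 2)
        - (if i = j then (1 : 𝕜) else 0) / (x ⬝ᵥ w)) e (Pi.single i 1)
      = w j / (2 * (e ⬝ᵥ w) ^ 2) - e i * w i * w j / (e ⬝ᵥ w) ^ 3
          + (if i = j then (1 : 𝕜) else 0) * w i / (e ⬝ᵥ w) ^ 2 := by
  have hdiff : DifferentiableAt 𝕜 (fun x : ι → 𝕜 => x i * w j / (2 * (x ⬝ᵥ w) ^ 2)
      - (if i = j then (1 : 𝕜) else 0) / (x ⬝ᵥ w)) e := by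
    have := differentiable_dotProduct_const w
    fun_prop (disch := simp [hc])
  rw [← hdiff.lineDeriv_eq_fderiv, lineDeriv]
  simp only [dotProduct_add_smul_single, Pi.add_apply, Pi.smul_apply, Pi.single_eq_same,
    smul_eq_mul, mul_one]
  exact (hasDerivAt_add_mul_div_sq_sub_div _ _ _ _ _ hc).deriv

lemma sum_partialDerivs_eq [DecidableEq ι] (w e : ι → 𝕜) (hc : e ⬝ᵥ w ≠ 0) (j : ι) :
    ∑ i, (w j / (2 * (e ⬝ᵥ w) ^ 2) - e i * w i * w j / (e ⬝ᵥ w) ^ 3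
          + (if i = j then (1 : 𝕜) else 0) * w i / (e ⬝ᵥ w) ^ 2)
      = (Fintype.card ι : 𝕜) / 2 * w j / (e ⬝ᵥ w) ^ 2 := by
  have hdot : ∑ i, e i * w i * w j / (e ⬝ᵥ w) ^ 3 = w j / (e ⬝ᵥ w) ^ 2 := by
    rw [← Finset.sum_div, ← Finset.sum_mul]
    change (e ⬝ᵥ w) * w j / (e ⬝ᵥ w) ^ 3 = _
    field_simp
  simp only [Finset.sum_add_distrib, Finset.sum_sub_distrib, hdot, ite_mul, one_mul, zero_mul,
    ite_div, zero_div, Finset.sum_ite_eq', Finset.mem_univ, if_true, Finset.sum_const,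
    Finset.card_univ, nsmul_eq_mul]
  field_simp
  ring

theorem stmt_2_general (d : ℕ) (v v' e : Fin d → ℝ)
    (hc : e ⬝ᵥ (v - v') ≠ 0) (j : Fin d) :
    ∑ i, fderiv ℝ
        (fun x : Fin d → ℝ =>
          x i * (v - v') j / (2 * (x ⬝ᵥ (v - v')) ^ 2)
            - (if i = j then (1 : ℝ) else 0) / (x ⬝ᵥ (v - v'))) e (Pi.single i 1)
      = (d : ℝ) / 2 * (v - v') j / (e ⬝ᵥ (v - v')) ^ 2 := by
  simp only [fderiv_apply_single_eq _ _ hc]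
  simpa only [Fintype.card_fin] using sum_partialDerivs_eq (v - v') e hc j

/-- The column-wise divergence (with respect to `e`) of
`A(e)⁻¹ = (1/(2⟨e,v-v'⟩²)) [e (v-v')ᵀ] - (1/⟨e,v-v'⟩) I` equals the row vector
`(d/2) (v-v')ᵀ / ⟨e,v-v'⟩²`. -/
theorem stmt_2 (d : ℕ) (hd : 1 ≤ d) (v v' e : Fin d → ℝ)
    (hc : e ⬝ᵥ (v - v') ≠ 0) (j : Fin d) :
    ∑ i, fderiv ℝ
        (fun x : Fin d → ℝ =>
          x i * (v - v') j / (2 * (x ⬝ᵥ (v - v')) ^ 2)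
            - (if i = j then (1 : ℝ) else 0) / (x ⬝ᵥ (v - v'))) e (Pi.single i 1)
      = (d : ℝ) / 2 * (v - v') j / (e ⬝ᵥ (v - v')) ^ 2 :=
  stmt_2_general d v v' e hc j
end

section
/- Let v, v' ∈ ℝ^d, let B : ℝ^d → (0,∞) be continuously differentiable, and let ψ ∈ C_b^∞(ℝ^d; ℝ^d). With v*(e) = v - ⟨e, v-v'⟩ e and A(e) the Jacobian of v*, one has on {e : ⟨e, v-v'⟩ ≠ 0}: div_e ( A(e)^{-1} ψ(v*(e)) B(e) ) = (div ψ)(v*(e)) B(e) + ⟨ψ(v*(e)), 𝐝(v,v',e)⟩ B(e), where 𝐝(v,v',e) = [ (v-v')(d + ⟨e, ∇_e log B(e)⟩) - 2⟨e, v-v'⟩ ∇_e log B(e) ] / (2⟨e, v-v'⟩²). -/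
open Matrix

set_option maxHeartbeats 1000000 in
/-- Divergence identity for the vector field `e ↦ A(e)⁻¹ ψ(v*(e)) B(e)`:
`div_e (A(e)⁻¹ ψ(v*(e)) B(e)) = (div ψ)(v*(e)) B(e) + ⟨ψ(v*(e)), 𝐝(v,v',e)⟩ B(e)`. -/
theorem stmt_3 (d : ℕ) (hd : 1 ≤ d) (v v' : Fin d → ℝ)
    (B : (Fin d → ℝ) → ℝ) (hBpos : ∀ x, 0 < B x) (hB : ContDiff ℝ 1 B)
    (ψ : (Fin d → ℝ) → (Fin d → ℝ)) (hψ : ContDiff ℝ (⊤ : ℕ∞) ψ)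
    (hψb : Bornology.IsBounded (Set.range ψ))
    (e : Fin d → ℝ) (hc : e ⬝ᵥ (v - v') ≠ 0) :
    let w : Fin d → ℝ := v - v'
    let c : (Fin d → ℝ) → ℝ := fun x => x ⬝ᵥ w
    let vstar : (Fin d → ℝ) → (Fin d → ℝ) := fun x => v - c x • x
    let Ainv : (Fin d → ℝ) → Matrix (Fin d) (Fin d) ℝ := fun x =>
      (1 / (2 * c x ^ 2)) • Matrix.vecMulVec x w - (1 / c x) • (1 : Matrix (Fin d) (Fin d) ℝ)
    let gradLogB : Fin d → ℝ := fun i => fderiv ℝ (fun x => Real.log (B x)) e (Pi.single i 1)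
    let dvec : Fin d → ℝ := (1 / (2 * c e ^ 2)) •
      ((((d : ℝ) + e ⬝ᵥ gradLogB) • w) - (2 * c e) • gradLogB)
    (∑ i, fderiv ℝ (fun x => (Ainv x).mulVec (ψ (vstar x)) i * B x) e (Pi.single i 1))
      = (∑ i, fderiv ℝ ψ (vstar e) (Pi.single i 1) i) * B e
        + (ψ (vstar e) ⬝ᵥ dvec) * B e := by
  intro w c vstar Ainv gradLogB dvec
  have hcne : c e ≠ 0 := hc
  have hAinv : ∀ (x y : Fin d → ℝ) (i : Fin d), (Ainv x).mulVec y i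
      = (2 * c x ^ 2)⁻¹ * (x i * (w ⬝ᵥ y)) - (c x)⁻¹ * y i := by
    intro x y i
    simp only [Ainv, one_div, Matrix.mulVec, dotProduct, Matrix.sub_apply, Matrix.smul_apply,
      smul_eq_mul, Matrix.vecMulVec_apply, Matrix.one_apply, mul_ite, mul_one, mul_zero, ite_mul,
      zero_mul, sub_mul, Finset.sum_sub_distrib, Finset.sum_ite_eq', Finset.sum_ite_eq,
      Finset.mem_univ, if_true, Finset.mul_sum]
    congr 1
    exact Finset.sum_congr rfl fun j _ => by ring
  set Lmap : (Fin d → ℝ) →L[ℝ] ℝ := ∑ j, w j • ContinuousLinearMap.proj j with hLdef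
  have hLapp : ∀ y : Fin d → ℝ, Lmap y = w ⬝ᵥ y := by
    intro y; simp [hLdef, ContinuousLinearMap.sum_apply, dotProduct]
  have hLc : ∀ x : Fin d → ℝ, c x = Lmap x := by
    intro x; rw [hLapp]; simp [c, dotProduct, mul_comm]
  have hLsingle : ∀ i, Lmap (Pi.single i 1) = w i := by
    intro i; rw [hLapp]; simp [dotProduct, Pi.single_apply]
  have hc' : HasFDerivAt c Lmap e :=
    (Lmap.hasFDerivAt (x := e)).congr_of_eventuallyEq (Filter.Eventually.of_forall hLc)
  set Dv : (Fin d → ℝ) →L[ℝ] (Fin d → ℝ) :=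
    -(c e • ContinuousLinearMap.id ℝ (Fin d → ℝ) + Lmap.smulRight e) with hDv
  have hv' : HasFDerivAt vstar Dv e := (hc'.smul (hasFDerivAt_id (𝕜 := ℝ) e)).const_sub v
  set Dψ : (Fin d → ℝ) →L[ℝ] (Fin d → ℝ) := fderiv ℝ ψ (vstar e) with hDψ
  have hψd : Differentiable ℝ ψ := hψ.differentiable (by simp)
  have hg : HasFDerivAt (fun x => ψ (vstar x)) (Dψ.comp Dv) e :=
    (hψd (vstar e)).hasFDerivAt.comp e hv'
  have hgi : ∀ i, HasFDerivAt (fun x => ψ (vstar x) i)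
      ((ContinuousLinearMap.proj i).comp (Dψ.comp Dv)) e := fun i => hasFDerivAt_pi'.1 hg i
  have hs : HasFDerivAt (fun x => w ⬝ᵥ ψ (vstar x)) (Lmap.comp (Dψ.comp Dv)) e := by
    have h := Lmap.hasFDerivAt.comp e hg
    exact h.congr_of_eventuallyEq (Filter.Eventually.of_forall fun x => (hLapp _).symm)
  have hr : HasFDerivAt (fun x => (c x)⁻¹)
      ((ContinuousLinearMap.smulRight (1 : ℝ →L[ℝ] ℝ) (-(c e ^ 2)⁻¹)).comp Lmap) e :=
    (hasFDerivAt_inv hcne).comp e hc'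
  have h2c : HasFDerivAt (fun x => 2 * c x ^ 2) ((2:ℝ) • (c e • Lmap + c e • Lmap)) e := by
    have h := (hc'.mul hc').const_mul (2:ℝ)
    refine h.congr_of_eventuallyEq (Filter.Eventually.of_forall fun x => ?_)
    simp only [Pi.mul_apply]; ring
  have h2cne : 2 * c e ^ 2 ≠ 0 := by
    have := pow_ne_zero 2 hcne; positivity
  have hq : HasFDerivAt (fun x => (2 * c x ^ 2)⁻¹)
      ((ContinuousLinearMap.smulRight (1 : ℝ →L[ℝ] ℝ) (-((2 * c e ^ 2) ^ 2)⁻¹)).comp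
        ((2:ℝ) • (c e • Lmap + c e • Lmap))) e :=
    (hasFDerivAt_inv h2cne).comp e h2c
  have hBe : HasFDerivAt B (fderiv ℝ B e) e := (hB.differentiable one_ne_zero e).hasFDerivAt
  have hxi : ∀ i, HasFDerivAt (fun x : Fin d → ℝ => x i)
      (ContinuousLinearMap.proj (R := ℝ) (φ := fun _ : Fin d => ℝ) i) e :=
    fun i => hasFDerivAt_apply i e
  have hBne : B e ≠ 0 := (hBpos e).ne'
  have hlog : HasFDerivAt (fun x => Real.log (B x)) ((B e)⁻¹ • fderiv ℝ B e) e := by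
    have h := (Real.hasDerivAt_log hBne).comp_hasFDerivAt e hBe
    exact h
  have hDB : ∀ i, fderiv ℝ B e (Pi.single i 1) = B e * gradLogB i := by
    intro i
    have : gradLogB i = (B e)⁻¹ * fderiv ℝ B e (Pi.single i 1) := by
      simp only [gradLogB, hlog.fderiv, ContinuousLinearMap.smul_apply, smul_eq_mul]
    rw [this]
    field_simp
  have step : ∀ i : Fin d, fderiv ℝ (fun x => (Ainv x).mulVec (ψ (vstar x)) i * B x) e
      (Pi.single i 1) =
      (-(B e * (2 * c e ^ 2)⁻¹ * Lmap (Dψ e))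
          - B e * (w ⬝ᵥ ψ (vstar e)) * (4 * c e * ((2 * c e ^ 2) ^ 2)⁻¹)) * (e i * w i)
        + (-(B e * (2 * c e ^ 2)⁻¹ * c e)) * (e i * Lmap (Dψ (Pi.single i 1)))
        + (B e * (c e)⁻¹) * (w i * Dψ e i)
        + (B e * (c e ^ 2)⁻¹) * (w i * ψ (vstar e) i)
        + B e * Dψ (Pi.single i 1) i
        + B e * (2 * c e ^ 2)⁻¹ * (w ⬝ᵥ ψ (vstar e))
        + (B e * (2 * c e ^ 2)⁻¹ * (w ⬝ᵥ ψ (vstar e))) * (e i * gradLogB i)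
        + (-(B e * (c e)⁻¹)) * (ψ (vstar e) i * gradLogB i) := by
    intro i
    have h0 := ((hq.mul ((hxi i).mul hs)).sub (hr.mul (hgi i))).mul hBe
    have h1 := h0.congr_of_eventuallyEq
      (Filter.Eventually.of_forall fun x => by simp only [hAinv] :
        (fun x => (Ainv x).mulVec (ψ (vstar x)) i * B x) =ᶠ[nhds e]
        (fun x => ((2 * c x ^ 2)⁻¹ * (x i * (w ⬝ᵥ ψ (vstar x))) - (c x)⁻¹ * ψ (vstar x) i) * B x))
    rw [h1.fderiv]
    simp only [ContinuousLinearMap.add_apply, ContinuousLinearMap.sub_apply,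
      ContinuousLinearMap.smul_apply, ContinuousLinearMap.comp_apply,
      ContinuousLinearMap.smulRight_apply, ContinuousLinearMap.one_apply,
      ContinuousLinearMap.neg_apply, ContinuousLinearMap.id_apply, hLsingle,
      map_neg, map_add, _root_.map_smul, smul_eq_mul, Pi.neg_apply, Pi.add_apply, Pi.smul_apply,
      neg_mul, mul_neg, neg_neg, hDv, ContinuousLinearMap.proj_apply, Pi.single_eq_same,
      mul_one, hDB, Pi.mul_apply, Pi.sub_apply]
    field_simp
    ring
  -- the sum identities
  have S1 : ∑ i, e i * w i = c e := by simp [c, dotProduct]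
  have S2 : ∑ i, e i * Lmap (Dψ (Pi.single i 1)) = Lmap (Dψ e) := by
    have he : (∑ i, e i • (Pi.single i 1 : Fin d → ℝ)) = e := by
      have : ∀ i : Fin d, e i • (Pi.single i 1 : Fin d → ℝ) = Pi.single i (e i) := by
        intro i
        rw [← Pi.single_smul, smul_eq_mul, mul_one]
      simp_rw [this]
      exact Finset.univ_sum_single e
    calc ∑ i, e i * Lmap (Dψ (Pi.single i 1))
        = ∑ i, Lmap (Dψ (e i • (Pi.single i 1 : Fin d → ℝ))) := by
          simp [_root_.map_smul, smul_eq_mul]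
      _ = Lmap (Dψ (∑ i, e i • (Pi.single i 1 : Fin d → ℝ))) := by
          rw [← map_sum, ← map_sum]
      _ = Lmap (Dψ e) := by rw [he]
  have S3 : ∑ i, w i * Dψ e i = Lmap (Dψ e) := by
    rw [hLapp]; simp [dotProduct]
  have S4 : ∑ i, w i * ψ (vstar e) i = w ⬝ᵥ ψ (vstar e) := by simp [dotProduct]
  have S6 : ∑ i, e i * gradLogB i = e ⬝ᵥ gradLogB := by simp [dotProduct]
  have hRdvec : ψ (vstar e) ⬝ᵥ dvec = (2 * c e ^ 2)⁻¹ *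
      (((d:ℝ) + e ⬝ᵥ gradLogB) * (w ⬝ᵥ ψ (vstar e))
        - 2 * c e * ∑ i, ψ (vstar e) i * gradLogB i) := by
    have hterm : ∀ i, ψ (vstar e) i * dvec i = (2 * c e ^ 2)⁻¹ *
        (((d:ℝ) + e ⬝ᵥ gradLogB) * (w i * ψ (vstar e) i)
          - 2 * c e * (ψ (vstar e) i * gradLogB i)) := by
      intro i
      simp only [dvec, Pi.smul_apply, Pi.sub_apply, Pi.add_apply, smul_eq_mul, one_div]
      ring
    calc ψ (vstar e) ⬝ᵥ dvec = ∑ i, ψ (vstar e) i * dvec i := by simp [dotProduct]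
      _ = ∑ i, (2 * c e ^ 2)⁻¹ * (((d:ℝ) + e ⬝ᵥ gradLogB) * (w i * ψ (vstar e) i)
          - 2 * c e * (ψ (vstar e) i * gradLogB i)) := Finset.sum_congr rfl fun i _ => hterm i
      _ = (2 * c e ^ 2)⁻¹ * (((d:ℝ) + e ⬝ᵥ gradLogB) * (∑ i, w i * ψ (vstar e) i)
          - 2 * c e * ∑ i, ψ (vstar e) i * gradLogB i) := by
          rw [← Finset.mul_sum, Finset.sum_sub_distrib, ← Finset.mul_sum, ← Finset.mul_sum]
      _ = (2 * c e ^ 2)⁻¹ * (((d:ℝ) + e ⬝ᵥ gradLogB) * (w ⬝ᵥ ψ (vstar e))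
          - 2 * c e * ∑ i, ψ (vstar e) i * gradLogB i) := by rw [S4]
  calc (∑ i, fderiv ℝ (fun x => (Ainv x).mulVec (ψ (vstar x)) i * B x) e (Pi.single i 1))
      = ∑ i : Fin d,
        ((-(B e * (2 * c e ^ 2)⁻¹ * Lmap (Dψ e))
          - B e * (w ⬝ᵥ ψ (vstar e)) * (4 * c e * ((2 * c e ^ 2) ^ 2)⁻¹)) * (e i * w i)
        + (-(B e * (2 * c e ^ 2)⁻¹ * c e)) * (e i * Lmap (Dψ (Pi.single i 1)))
        + (B e * (c e)⁻¹) * (w i * Dψ e i)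
        + (B e * (c e ^ 2)⁻¹) * (w i * ψ (vstar e) i)
        + B e * Dψ (Pi.single i 1) i
        + B e * (2 * c e ^ 2)⁻¹ * (w ⬝ᵥ ψ (vstar e))
        + (B e * (2 * c e ^ 2)⁻¹ * (w ⬝ᵥ ψ (vstar e))) * (e i * gradLogB i)
        + (-(B e * (c e)⁻¹)) * (ψ (vstar e) i * gradLogB i)) :=
        Finset.sum_congr rfl fun i _ => step i
    _ = (∑ i, Dψ (Pi.single i 1) i) * B e + (ψ (vstar e) ⬝ᵥ dvec) * B e := by
        simp only [Finset.sum_add_distrib, ← Finset.mul_sum, Finset.sum_const,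
          Finset.card_univ, Fintype.card_fin, nsmul_eq_mul]
        rw [S1, S2, S3, S4, S6, hRdvec]
        field_simp
        ring
end

section
/- Let x, h ∈ ℝ^d with ⟨h, n⟩ < 0 for a unit vector n (inward-moving velocity at a boundary point), let D ⊂ ℝ^d be open convex with smooth boundary and x ∈ D. Consider the free flight t ↦ x + t h. Then the hitting time τ := inf{t > 0 : x + t h ∈ ∂D} (if finite) depends continuously on (x, h) on the set where the flight hits ∂D transversally, i.e., where ⟨h, n(x + τ h)⟩ > 0 with n the outer normal. -/
open RealInnerProductSpace

lemma cross_frontier {E : Type*} [NormedAddCommGroup E] [NormedSpace ℝ E]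
    (D : Set E) (hopen : IsOpen D)
    (a v : E) (ha : a ∈ D) (T : ℝ) (hT : 0 < T)
    (hout : a + T • v ∉ closure D) :
    ∃ t, 0 < t ∧ t ≤ T ∧ a + t • v ∈ frontier D := by
  set g : ℝ → E := fun t => a + t • v with hg
  have hgc : Continuous g := continuous_const.add (continuous_id.smul continuous_const)
  set A : Set ℝ := Set.Icc 0 T ∩ g ⁻¹' closure D with hA
  have hA0 : (0:ℝ) ∈ A := by
    refine ⟨⟨le_rfl, hT.le⟩, ?_⟩
    simp only [Set.mem_preimage, hg, zero_smul, add_zero]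
    exact subset_closure ha
  have hAcpt : IsCompact A := isCompact_Icc.inter_right (isClosed_closure.preimage hgc)
  have hAne : A.Nonempty := ⟨0, hA0⟩
  set t₀ : ℝ := sSup A with ht₀
  have ht₀mem : t₀ ∈ A := hAcpt.sSup_mem hAne
  have ht₀T : t₀ ≤ T := ht₀mem.1.2
  have ht₀0 : 0 ≤ t₀ := ht₀mem.1.1
  have hTnot : T ∉ A := fun hTA => hout hTA.2
  have ht₀ltT : t₀ < T := lt_of_le_of_ne ht₀T (fun he => hTnot (he ▸ ht₀mem))
  have hafter : ∀ t ∈ Set.Ioc t₀ T, g t ∉ closure D := by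
    intro t ht hmem
    have : t ∈ A := ⟨⟨ht₀0.trans ht.1.le, ht.2⟩, hmem⟩
    exact absurd (le_csSup hAcpt.bddAbove this) (not_le.2 ht.1)
  have hfr : g t₀ ∈ frontier D := by
    rw [frontier_eq_closure_inter_closure]
    refine ⟨ht₀mem.2, ?_⟩
    have h1 : t₀ ∈ closure (Set.Ioc t₀ T) := by
      rw [closure_Ioc ht₀ltT.ne]
      exact ⟨le_rfl, ht₀T⟩
    have h2 : g t₀ ∈ closure (g '' Set.Ioc t₀ T) :=
      (hgc.continuousWithinAt).mem_closure_image h1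
    refine closure_mono ?_ h2
    rintro _ ⟨t, ht, rfl⟩
    exact fun hgt => hafter t ht (subset_closure hgt)
  have ht₀pos : 0 < t₀ := by
    rcases lt_or_eq_of_le ht₀0 with hlt | heq
    · exact hlt
    · exfalso
      have : g 0 ∈ frontier D := heq ▸ hfr
      rw [hopen.frontier_eq] at this
      refine this.2 ?_
      simpa [hg] using ha
  exact ⟨t₀, ht₀pos, ht₀T, hfr⟩

/-- Continuity of the boundary hitting time of a free flight in a bounded open convex
domain with smooth boundary, at a point where the flight hits the boundary
transversally (positive component of the velocity along the outer normal). -/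
theorem stmt_17 (d : ℕ) (hd : 1 ≤ d) (D : Set (EuclideanSpace ℝ (Fin d)))
    (hopen : IsOpen D) (hconv : Convex ℝ D) (hbdd : Bornology.IsBounded D)
    (n : EuclideanSpace ℝ (Fin d) → EuclideanSpace ℝ (Fin d))
    (hn : ∀ y ∈ frontier D, ‖n y‖ = 1 ∧ ∀ z ∈ D, ⟪z - y, n y⟫ < 0)
    (hncont : ContinuousOn n (frontier D))
    (x h : EuclideanSpace ℝ (Fin d)) (hx : x ∈ D)
    (n₀ : EuclideanSpace ℝ (Fin d)) (hn₀ : ‖n₀‖ = 1) (hdir : ⟪h, n₀⟫ < 0)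
    (τ : EuclideanSpace ℝ (Fin d) × EuclideanSpace ℝ (Fin d) → ℝ)
    (hτ : ∀ p, τ p = sInf {t : ℝ | 0 < t ∧ p.1 + t • p.2 ∈ frontier D})
    (htpos : 0 < τ (x, h))
    (hhit : x + τ (x, h) • h ∈ frontier D)
    (htrans : 0 < ⟪h, n (x + τ (x, h) • h)⟫) :
    ContinuousAt τ (x, h) := by
  set τ₀ : ℝ := τ (x, h) with hτ₀
  set y₀ : EuclideanSpace ℝ (Fin d) := x + τ₀ • h with hy₀
  set ν : EuclideanSpace ℝ (Fin d) := n y₀ with hν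
  -- points of D strictly before the hyperplane; closure at most 0
  have hhalf : ∀ z ∈ closure D, ⟪z - y₀, ν⟫ ≤ 0 := by
    have hsub : D ⊆ {z : EuclideanSpace ℝ (Fin d) | ⟪z - y₀, ν⟫ ≤ 0} := fun z hz => ((hn y₀ hhit).2 z hz).le
    have hcl : IsClosed {z : EuclideanSpace ℝ (Fin d) | ⟪z - y₀, ν⟫ ≤ 0} :=
      isClosed_le ((continuous_id.sub continuous_const).inner continuous_const)
        continuous_const
    exact fun z hz => (closure_minimal hsub hcl) hz
  -- the free flight stays in D strictly before τ₀
  have hseg : ∀ t : ℝ, 0 ≤ t → t < τ₀ → x + t • h ∈ D := by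
    intro t ht0 htlt
    rcases eq_or_lt_of_le ht0 with rfl | htpos'
    · simpa using hx
    have hτne : τ₀ ≠ 0 := htpos.ne'
    have hcomb : x + t • h = (1 - t / τ₀) • x + (t / τ₀) • (x + τ₀ • h) := by
      rw [smul_add, smul_smul, div_mul_cancel₀ _ hτne, sub_smul, one_smul]
      abel
    have hclmem : x + t • h ∈ closure D := by
      rw [hcomb]
      have hw1 : (0:ℝ) ≤ 1 - t / τ₀ := by
        rw [sub_nonneg]
        exact div_le_one_of_le₀ htlt.le htpos.le
      have hw2 : (0:ℝ) ≤ t / τ₀ := div_nonneg ht0 htpos.le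
      have hw3 : (1 - t / τ₀) + t / τ₀ = 1 := by ring
      exact hconv.closure (subset_closure hx)
        (frontier_subset_closure hhit) hw1 hw2 hw3
    -- not on the frontier, since t < τ₀ = sInf of hitting times
    have hS : τ₀ = sInf {s : ℝ | 0 < s ∧ x + s • h ∈ frontier D} := hτ (x, h)
    by_contra hnot
    have hfr : x + t • h ∈ frontier D := by
      rw [hopen.frontier_eq]
      exact ⟨hclmem, hnot⟩
    have : τ₀ ≤ t := by
      rw [hS]
      exact csInf_le ⟨0, fun s hs => hs.1.le⟩ ⟨htpos', hfr⟩
    exact absurd htlt (not_lt.2 this)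
  -- main continuity argument
  rw [ContinuousAt, Metric.tendsto_nhds]
  intro ε hε
  set ε' : ℝ := min (ε / 2) (τ₀ / 2) with hε'
  have hε'pos : 0 < ε' := lt_min (by linarith) (by linarith)
  have hε'lt : ε' < ε := (min_le_left _ _).trans_lt (by linarith)
  have hε'τ : ε' < τ₀ := (min_le_right _ _).trans_lt (by linarith)
  -- compactness: a δ-thickening of the initial segment stays in D
  have hK : IsCompact ((fun t => x + t • h) '' Set.Icc 0 (τ₀ - ε')) :=
    (isCompact_Icc.image (continuous_const.add (continuous_id.smul continuous_const)))
  have hKD : (fun t => x + t • h) '' Set.Icc 0 (τ₀ - ε') ⊆ D := by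
    rintro _ ⟨t, ht, rfl⟩
    exact hseg t ht.1 (lt_of_le_of_lt ht.2 (by linarith))
  obtain ⟨δ, hδpos, hδ⟩ := hK.exists_thickening_subset_open hopen hKD
  -- eventual conditions
  have ev1 : ∀ᶠ p : (EuclideanSpace ℝ (Fin d)) × (EuclideanSpace ℝ (Fin d)) in
      nhds (x, h), ‖p.1 - x‖ < δ / 2 := by
    have hc : Continuous fun p : (EuclideanSpace ℝ (Fin d)) × (EuclideanSpace ℝ (Fin d)) =>
        ‖p.1 - x‖ := (continuous_fst.sub continuous_const).norm
    have := (hc.tendsto (x, h)).eventually (gt_mem_nhds (by simp [hδpos] : ‖x - x‖ < δ / 2))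
    exact this
  have ev2 : ∀ᶠ p : (EuclideanSpace ℝ (Fin d)) × (EuclideanSpace ℝ (Fin d)) in
      nhds (x, h), ‖p.2 - h‖ < δ / (2 * (τ₀ + 1)) := by
    have hc : Continuous fun p : (EuclideanSpace ℝ (Fin d)) × (EuclideanSpace ℝ (Fin d)) =>
        ‖p.2 - h‖ := (continuous_snd.sub continuous_const).norm
    have hpos : 0 < δ / (2 * (τ₀ + 1)) := by positivity
    exact (hc.tendsto (x, h)).eventually (gt_mem_nhds (by simpa using hpos))
  have ev3 : ∀ᶠ p : (EuclideanSpace ℝ (Fin d)) × (EuclideanSpace ℝ (Fin d)) in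
      nhds (x, h), p.1 ∈ D :=
    continuous_fst.continuousAt.eventually_mem (hopen.mem_nhds hx)
  have ev4 : ∀ᶠ p : (EuclideanSpace ℝ (Fin d)) × (EuclideanSpace ℝ (Fin d)) in
      nhds (x, h), 0 < ⟪(p.1 + (τ₀ + ε') • p.2) - y₀, ν⟫ := by
    have hc : Continuous fun p : (EuclideanSpace ℝ (Fin d)) × (EuclideanSpace ℝ (Fin d)) =>
        ⟪(p.1 + (τ₀ + ε') • p.2) - y₀, ν⟫ :=
      by fun_prop
    have hval : 0 < ⟪(x + (τ₀ + ε') • h) - y₀, ν⟫ := by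
      have : (x + (τ₀ + ε') • h) - y₀ = ε' • h := by
        rw [hy₀, add_smul]
        abel
      rw [this, real_inner_smul_left]
      exact mul_pos hε'pos htrans
    exact (hc.tendsto (x, h)).eventually (lt_mem_nhds hval)
  filter_upwards [ev1, ev2, ev3, ev4] with p hp1 hp2 hp3 hp4
  -- the nearby flight stays in D up to time τ₀ - ε'
  have hstay : ∀ t : ℝ, 0 ≤ t → t ≤ τ₀ - ε' → p.1 + t • p.2 ∈ D := by
    intro t ht0 htle
    apply hδ
    rw [Metric.mem_thickening_iff]
    refine ⟨x + t • h, ⟨t, ⟨ht0, htle⟩, rfl⟩, ?_⟩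
    have hcalc : dist (p.1 + t • p.2) (x + t • h) ≤ ‖p.1 - x‖ + t * ‖p.2 - h‖ := by
      rw [dist_eq_norm]
      have : p.1 + t • p.2 - (x + t • h) = (p.1 - x) + t • (p.2 - h) := by
        rw [smul_sub]; abel
      rw [this]
      refine (norm_add_le _ _).trans ?_
      rw [norm_smul, Real.norm_eq_abs, abs_of_nonneg ht0]
    have htτ : t ≤ τ₀ := by linarith
    have hb : t * ‖p.2 - h‖ ≤ τ₀ * (δ / (2 * (τ₀ + 1))) := by
      apply mul_le_mul htτ hp2.le (norm_nonneg _) htpos.le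
    have : τ₀ * (δ / (2 * (τ₀ + 1))) < δ / 2 := by
      have hτ1 : (0:ℝ) < τ₀ + 1 := by linarith
      have h1 : τ₀ * (δ / (2 * (τ₀ + 1))) < (τ₀ + 1) * (δ / (2 * (τ₀ + 1))) :=
        mul_lt_mul_of_pos_right (by linarith) (by positivity)
      have h2 : (τ₀ + 1) * (δ / (2 * (τ₀ + 1))) = δ / 2 := by
        field_simp
      linarith
    calc dist (p.1 + t • p.2) (x + t • h) ≤ ‖p.1 - x‖ + t * ‖p.2 - h‖ := hcalc
      _ < δ / 2 + δ / 2 := by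
          apply add_lt_add_of_lt_of_le hp1 (hb.trans this.le)
      _ = δ := by ring
  -- the nearby flight exits the closure of D by time τ₀ + ε'
  have hout : p.1 + (τ₀ + ε') • p.2 ∉ closure D := fun hmem =>
    absurd (hhalf _ hmem) (not_le.2 hp4)
  obtain ⟨t₁, ht₁pos, ht₁le, ht₁fr⟩ :=
    cross_frontier D hopen p.1 p.2 hp3 (τ₀ + ε') (by linarith) hout
  -- the hitting-time set of p
  set S : Set ℝ := {t : ℝ | 0 < t ∧ p.1 + t • p.2 ∈ frontier D} with hSdef
  have hSne : S.Nonempty := ⟨t₁, ht₁pos, ht₁fr⟩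
  have hSlb : ∀ t ∈ S, τ₀ - ε' ≤ t := by
    intro t ht
    by_contra hcon
    push_neg at hcon
    have hmemD : p.1 + t • p.2 ∈ D := hstay t ht.1.le hcon.le
    have := ht.2
    rw [hopen.frontier_eq] at this
    exact this.2 hmemD
  have hSbdd : BddBelow S := ⟨τ₀ - ε', hSlb⟩
  have hlow : τ₀ - ε' ≤ sInf S := le_csInf hSne hSlb
  have hupp : sInf S ≤ τ₀ + ε' := (csInf_le hSbdd ⟨ht₁pos, ht₁fr⟩).trans ht₁le
  have hτp : τ p = sInf S := hτ p
  rw [Real.dist_eq, hτp]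
  rw [abs_sub_lt_iff]
  constructor <;> linarith
end
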